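/- Let Γ be a finite group acting on a k-algebra R, where k is a field of characteristic zero. Let 𝒫 be a full abelian subcategory of finite-dimensional R-modules and 𝒟 a full abelian subcategory of finite-dimensional (R ⋊ Γ)-modules such that the restriction to R of every object of 𝒟 lies in 𝒫. If 𝒫 is semisimple (every object is a direct sum of simple objects), then 𝒟 is semisimple. -/

import Mathlib

universe u

/-- The skew group ring `R ⋊ Γ`, presented as a `k`-algebra `B` with an algebra embedding of
`R`, a group homomorphism from `Γ` to the units of `B`, the skew commutation relation, and
freeness `R ⊗ kΓ ≃ B`. -/
structure SkewGroupRing (k R Γ B : Type*) [Field k] [Ring R] [Algebra k R]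
    [Group Γ] [Ring B] [Algebra k B] (φ : Γ →* (R ≃ₐ[k] R)) where
  ι : R →ₐ[k] B
  u : Γ →* Bˣ
  comm : ∀ (γ : Γ) (r : R), (u γ : B) * ι r = ι (φ γ r) * (u γ : B)
  bij : Function.Bijective fun f : Γ →₀ R => f.sum fun γ r => ι r * (u γ : B)

/-!
Maschke's averaging trick. Restricted to `R`, a short exact sequence of `R ⋊ Γ`-modules splits
by an `R`-linear section `σ` of `g`; replace it by `(1 / |Γ|) ∑_γ γ σ γ⁻¹`. Conjugation by `γ`
maps `ι R` into itself, so the average is still `R`-linear; reindexing the sum shows it is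
`Γ`-equivariant; hence it is linear over `R ⋊ Γ`, which is spanned by the products `ι r * u γ`.
As `g` is `Γ`-equivariant, each of the `|Γ|` terms is again a section of `g`, and dividing by
`|Γ|`, possible in characteristic zero, gives a section.
-/

section Average

variable {Γ B M N : Type*} [Group Γ] [Fintype Γ] [Ring B]
  [AddCommGroup M] [Module B M] [AddCommGroup N] [Module B N]

def unitsAverage (u : Γ →* Bˣ) (σ : M →+ N) : M →+ N where
  toFun m := ∑ γ, u γ • σ ((u γ)⁻¹ • m)
  map_zero' := by simp
  map_add' x y := by simp [Finset.sum_add_distrib]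

variable (u : Γ →* Bˣ) (σ : M →+ N)

theorem unitsAverage_apply (m : M) : unitsAverage u σ m = ∑ γ, u γ • σ ((u γ)⁻¹ • m) := rfl

theorem unitsAverage_smul_of_commute (b : B)
    (hb : ∀ γ m, σ ((↑(u γ)⁻¹ * b * u γ : B) • m) = (↑(u γ)⁻¹ * b * u γ : B) • σ m) (m : M) :
    unitsAverage u σ (b • m) = b • unitsAverage u σ m := by
  simp only [unitsAverage_apply, Finset.smul_sum]
  refine Finset.sum_congr rfl fun γ _ => ?_
  have hinv : (↑(u γ)⁻¹ : B) * b = (↑(u γ)⁻¹ * b * u γ) * ↑(u γ)⁻¹ := by simp [mul_assoc]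
  have hconj : (u γ : B) * (↑(u γ)⁻¹ * b * u γ) = b * u γ := by simp [← mul_assoc]
  rw [Units.smul_def, Units.smul_def, smul_smul, hinv, mul_smul, hb, smul_smul, hconj, mul_smul,
    Units.smul_def, Units.smul_def]

theorem unitsAverage_units_smul (δ : Γ) (m : M) :
    unitsAverage u σ (u δ • m) = u δ • unitsAverage u σ m := by
  simp only [unitsAverage_apply, Finset.smul_sum]
  refine (Fintype.sum_equiv (Equiv.mulLeft δ) _ _ fun γ => ?_).symm
  simp [mul_smul]

theorem map_unitsAverage_of_leftInverse (g : N →ₗ[B] M) (hgσ : Function.LeftInverse g σ)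
    (m : M) : g (unitsAverage u σ m) = Fintype.card Γ • m := by
  simp [unitsAverage_apply, hgσ (_ : M)]

end Average

namespace SkewGroupRing

variable {k R Γ B : Type*} [Field k] [Ring R] [Algebra k R] [Group Γ] [Ring B] [Algebra k B]
  {φ : Γ →* (R ≃ₐ[k] R)} (S : SkewGroupRing k R Γ B φ)

theorem inv_u_mul_ι_mul_u (γ : Γ) (r : R) :
    (↑(S.u γ)⁻¹ : B) * S.ι r * S.u γ = S.ι (φ γ⁻¹ r) := by
  have h := S.comm γ⁻¹ r
  rw [map_inv] at h
  rw [h, mul_assoc, Units.inv_mul, mul_one]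

variable {M N : Type*} [AddCommGroup M] [Module B M] [AddCommGroup N] [Module B N]

theorem map_smul_of_map_ι_smul_of_map_u_smul (T : M →+ N)
    (hι : ∀ r m, T (S.ι r • m) = S.ι r • T m) (hu : ∀ γ m, T (S.u γ • m) = S.u γ • T m)
    (b : B) (m : M) : T (b • m) = b • T m := by
  obtain ⟨f, rfl⟩ := S.bij.2 b
  simp only [Finsupp.sum, Finset.sum_smul, map_sum, mul_smul, ← Units.smul_def, hu, hι]

theorem exists_section_of_ι_equivariant_section [Fintype Γ] (hΓ : IsUnit (Fintype.card Γ : B))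
    (g : M →ₗ[B] N) (σ : N →+ M) (hσ : ∀ r m, σ (S.ι r • m) = S.ι r • σ m)
    (hgσ : Function.LeftInverse g σ) : ∃ s : N →ₗ[B] M, g ∘ₗ s = LinearMap.id := by
  set T := unitsAverage S.u σ
  have hT : ∀ (b : B) m, T (b • m) = b • T m :=
    S.map_smul_of_map_ι_smul_of_map_u_smul T
      (fun r => unitsAverage_smul_of_commute S.u σ _ fun γ m => by
        simpa [inv_u_mul_ι_mul_u] using hσ (φ γ⁻¹ r) m)
      (unitsAverage_units_smul S.u σ)
  have hcomm (b : B) : Commute (↑hΓ.unit⁻¹ : B) b := by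
    apply Commute.units_inv_left
    rw [hΓ.unit_spec]
    exact Nat.cast_commute _ b
  refine ⟨{ toFun m := hΓ.unit⁻¹ • T m
            map_add' x y := by simp
            map_smul' b m := by simp [hT, Units.smul_def, smul_smul, (hcomm b).eq] }, ?_⟩
  ext m
  have hcard : Fintype.card Γ • m = hΓ.unit • m := by
    rw [Units.smul_def, hΓ.unit_spec, Nat.cast_smul_eq_nsmul]
  change g (hΓ.unit⁻¹ • T m) = m
  rw [Units.smul_def, g.map_smul, map_unitsAverage_of_leftInverse S.u σ g hgσ, hcard,
    ← Units.smul_def, inv_smul_smul]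

end SkewGroupRing

theorem skew_group_ring_semisimple_of_semisimple_general
    {k R Γ B : Type u} [Field k] [CharZero k] [Ring R] [Algebra k R]
    [Group Γ] [Fintype Γ] [Ring B] [Algebra k B]
    (φ : Γ →* (R ≃ₐ[k] R)) (S : SkewGroupRing k R Γ B φ)
    -- the subcategory 𝒫 of fin.-dim. R-modules, and 𝒟 of fin.-dim. (R ⋊ Γ)-modules
    (P : ∀ (N : Type u) [AddCommGroup N] [Module k N] [Module R N], Prop)
    (D : ∀ (M : Type u) [AddCommGroup M] [Module k M] [Module B M], Prop)
    -- restriction of every object of 𝒟 lies in 𝒫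
    (hres : ∀ (M : Type u) [AddCommGroup M] [Module k M] [Module B M],
      D M → (letI : Module R M := Module.compHom M S.ι.toRingHom; P M))
    -- 𝒫 is semisimple: every short exact sequence in 𝒫 splits
    (hP : ∀ (N₁ N₂ N₃ : Type u)
      [AddCommGroup N₁] [Module k N₁] [Module R N₁]
      [AddCommGroup N₂] [Module k N₂] [Module R N₂]
      [AddCommGroup N₃] [Module k N₃] [Module R N₃],
      P N₁ → P N₂ → P N₃ →
      ∀ (f : N₁ →ₗ[R] N₂) (g : N₂ →ₗ[R] N₃), Function.Injective f →
        Function.Surjective g → LinearMap.range f = LinearMap.ker g →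
        ∃ s : N₃ →ₗ[R] N₂, g ∘ₗ s = LinearMap.id) :
    -- then 𝒟 is semisimple: every short exact sequence in 𝒟 splits
    ∀ (M₁ M₂ M₃ : Type u)
      [AddCommGroup M₁] [Module k M₁] [Module B M₁]
      [AddCommGroup M₂] [Module k M₂] [Module B M₂]
      [AddCommGroup M₃] [Module k M₃] [Module B M₃],
      D M₁ → D M₂ → D M₃ →
      ∀ (f : M₁ →ₗ[B] M₂) (g : M₂ →ₗ[B] M₃), Function.Injective f →
        Function.Surjective g → LinearMap.range f = LinearMap.ker g →
        ∃ s : M₃ →ₗ[B] M₂, g ∘ₗ s = LinearMap.id := by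
  intro M₁ M₂ M₃ _ _ _ _ _ _ _ _ _ hD₁ hD₂ hD₃ f g hf hg hfg
  let : Module R M₁ := Module.compHom M₁ S.ι.toRingHom
  let : Module R M₂ := Module.compHom M₂ S.ι.toRingHom
  let : Module R M₃ := Module.compHom M₃ S.ι.toRingHom
  let fR : M₁ →ₗ[R] M₂ := { f.toAddMonoidHom with map_smul' r := f.map_smul (S.ι r) }
  let gR : M₂ →ₗ[R] M₃ := { g.toAddMonoidHom with map_smul' r := g.map_smul (S.ι r) }
  have hfgR : LinearMap.range fR = LinearMap.ker gR := SetLike.ext fun x => SetLike.ext_iff.mp hfg x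
  obtain ⟨σ, hσ⟩ := hP M₁ M₂ M₃ (hres M₁ hD₁) (hres M₂ hD₂) (hres M₃ hD₃) fR gR hf hg hfgR
  have hΓ : IsUnit (Fintype.card Γ : B) := by
    simpa using (IsUnit.mk0 (Fintype.card Γ : k) (Nat.cast_ne_zero.mpr Fintype.card_ne_zero)).map
      (algebraMap k B)
  exact S.exists_section_of_ι_equivariant_section hΓ g σ.toAddMonoidHom σ.map_smul
    (LinearMap.congr_fun hσ)

/-- Let `Γ` be a finite group acting on a `k`-algebra `R`, `k` of
characteristic zero.  Let `𝒫` be a full (abelian) subcategory of finite-dimensional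
`R`-modules, and `𝒟` a full (abelian) subcategory of finite-dimensional `(R ⋊ Γ)`-modules,
such that the restriction to `R` of every object of `𝒟` lies in `𝒫`.  If `𝒫` is
semisimple (every short exact sequence in `𝒫` splits), then `𝒟` is semisimple. -/
theorem skew_group_ring_semisimple_of_semisimple
    {k R Γ B : Type u} [Field k] [CharZero k] [Ring R] [Algebra k R]
    [Group Γ] [Fintype Γ] [Ring B] [Algebra k B]
    (φ : Γ →* (R ≃ₐ[k] R)) (S : SkewGroupRing k R Γ B φ)
    -- the subcategory 𝒫 of fin.-dim. R-modules, and 𝒟 of fin.-dim. (R ⋊ Γ)-modules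
    (P : ∀ (N : Type u) [AddCommGroup N] [Module k N] [Module R N], Prop)
    (D : ∀ (M : Type u) [AddCommGroup M] [Module k M] [Module B M], Prop)
    (hPfd : ∀ (N : Type u) [AddCommGroup N] [Module k N] [Module R N],
      P N → FiniteDimensional k N)
    (hDfd : ∀ (M : Type u) [AddCommGroup M] [Module k M] [Module B M],
      D M → FiniteDimensional k M)
    -- restriction of every object of 𝒟 lies in 𝒫
    (hres : ∀ (M : Type u) [AddCommGroup M] [Module k M] [Module B M],
      D M → (letI : Module R M := Module.compHom M S.ι.toRingHom; P M))
    -- 𝒫 is semisimple: every short exact sequence in 𝒫 splits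
    (hP : ∀ (N₁ N₂ N₃ : Type u)
      [AddCommGroup N₁] [Module k N₁] [Module R N₁]
      [AddCommGroup N₂] [Module k N₂] [Module R N₂]
      [AddCommGroup N₃] [Module k N₃] [Module R N₃],
      P N₁ → P N₂ → P N₃ →
      ∀ (f : N₁ →ₗ[R] N₂) (g : N₂ →ₗ[R] N₃), Function.Injective f →
        Function.Surjective g → LinearMap.range f = LinearMap.ker g →
        ∃ s : N₃ →ₗ[R] N₂, g ∘ₗ s = LinearMap.id) :
    -- then 𝒟 is semisimple: every short exact sequence in 𝒟 splits
    ∀ (M₁ M₂ M₃ : Type u)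
      [AddCommGroup M₁] [Module k M₁] [Module B M₁]
      [AddCommGroup M₂] [Module k M₂] [Module B M₂]
      [AddCommGroup M₃] [Module k M₃] [Module B M₃],
      D M₁ → D M₂ → D M₃ →
      ∀ (f : M₁ →ₗ[B] M₂) (g : M₂ →ₗ[B] M₃), Function.Injective f →
        Function.Surjective g → LinearMap.range f = LinearMap.ker g →
        ∃ s : M₃ →ₗ[B] M₂, g ∘ₗ s = LinearMap.id :=
  skew_group_ring_semisimple_of_semisimple_general φ S P D hres hP
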